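/- Let F^{ijm}_{kln} be string-net F-symbols (indices in a finite set of string types with involution *) satisfying the pentagon equation, the normalization F^{ijk}_{j*i*0} = (v_k/(v_i v_j))δ_{ijk}, tetrahedral symmetry, and the conjugation property F^{i*j*m*}_{k*l*n*} = (F^{ijm}_{kln})*. Then for all fixed i, α, γ, j and all β, β': Σ_{k} (F^{iα*β}_{γjk})* F^{iα*β'}_{γjk} = δ_{β,β'} δ_{iα*β} δ_{jβ*γ}, i.e., F restricted to the fusion-allowed subspace is unitary. -/

import Mathlib

open Finset

/-!
Taking the leg `r` of the pentagon equation to be the vacuum, with `l = s` and `k = j*`, makes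
three of its five F-symbols normalization constants (after a tetrahedral move), and the equation
becomes the orthogonality relation
`∑ₓ F^{msq}_{j*p*x} F^{jpi}_{m*s*x} = δ_{qi} (v_{s*}/v_s) δ_{jip} δ_{sim}`.
Tetrahedral symmetry and the conjugation property turn the first factor into a complex
conjugate, so the left-hand side is the Gram sum of the claim. With all external legs the
vacuum, that Gram sum is a sum of squared moduli, hence a nonnegative real equal to
`v_{a*}/v_a`; as normalization and tetrahedral symmetry give `(v_{a*}/v_a)² = 1`, the ratio is `1`.
-/

lemma mul_natCast_eq_self {R : Type*} [NonAssocSemiring R] {a : R} {n : ℕ} (hn : n ≤ 1)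
    (ha : n = 0 → a = 0) : a * n = a := by
  interval_cases n
  · simp [ha rfl]
  · simp

namespace StringNet

variable {S : Type} {z0 : S} {st : S → S} {δ : S → S → S → ℕ} {v : S → ℂ}
  {F : S → S → S → S → S → S → ℂ}

lemma v_st_mul_self [DecidableEq S] (hst : ∀ a, st (st a) = a) (hst0 : st z0 = z0)
    (hδ0 : ∀ i j, δ i j z0 = if j = st i then 1 else 0) (hδsym2 : ∀ i j k, δ i j k = δ i k j)
    (hv : ∀ s, v s ≠ 0) (hv0 : v z0 = 1)
    (hnorm : ∀ i j k, F i j k (st j) (st i) z0 = (v k / (v i * v j)) * (δ i j k : ℂ))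
    (htet2 : ∀ i j m k l n, F i j m k l n = F l k (st m) j i n) (a : S) :
    v (st a) * v (st a) = v a * v a := by
  have h := htet2 a z0 (st a) (st z0) (st a) z0
  have h' := hnorm (st a) z0 a
  rw [hst0, hst] at h'
  rw [hnorm, hst, hst0, h', hδsym2, hδ0, hδsym2, hδ0, hst] at h
  simp only [if_true, hv0] at h
  have := hv a
  have := hv (st a)
  field_simp at h
  linear_combination h

lemma F_vacuum_left (hst : ∀ a, st (st a) = a) (hv : ∀ s, v s ≠ 0) (hv0 : v z0 = 1)
    (hnorm : ∀ i j k, F i j k (st j) (st i) z0 = (v k / (v i * v j)) * (δ i j k : ℂ))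
    (htet2 : ∀ i j m k l n, F i j m k l n = F l k (st m) j i n)
    (htet3 : ∀ i j m k l n, F i j m k l n = (v m * v n / (v j * v l)) * F i m j (st k) n l)
    (i m s : S) :
    F z0 i (st i) m s (st s) = v (st s) / v s * δ s i m := by
  rw [htet2, hst, htet3, hnorm, hv0]
  have := hv s
  have := hv i
  have := hv m
  field_simp

lemma F_vacuum_right [DecidableEq S] (hst : ∀ a, st (st a) = a) (hst0 : st z0 = z0)
    (hδ0 : ∀ i j, δ i j z0 = if j = st i then 1 else 0)
    (hsupp : ∀ i j m k l n,
      δ i j m * δ k l (st m) * δ i l n * δ j k (st n) = 0 → F i j m k l n = 0)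
    (hnorm : ∀ i j k, F i j k (st j) (st i) z0 = (v k / (v i * v j)) * (δ i j k : ℂ))
    (j i p q : S) :
    F j i p (st q) (st j) z0 = if q = i then v p / (v j * v i) * δ j i p else 0 := by
  split_ifs with hqi
  · exact hqi ▸ hnorm j q p
  · apply hsupp
    have hδ : δ i (st q) (st z0) = 0 := by
      rw [hst0, hδ0, if_neg fun h => hqi (Function.Involutive.injective hst h)]
    rw [hδ, mul_zero]

lemma F_mul_F_vacuum (hst : ∀ a, st (st a) = a) (hδ01 : ∀ i j k, δ i j k ≤ 1)
    (hv : ∀ s, v s ≠ 0)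
    (hsupp : ∀ i j m k l n,
      δ i j m * δ k l (st m) * δ i l n * δ j k (st n) = 0 → F i j m k l n = 0)
    (hnorm : ∀ i j k, F i j k (st j) (st i) z0 = (v k / (v i * v j)) * (δ i j k : ℂ))
    (htet3 : ∀ i j m k l n, F i j m k l n = (v m * v n / (v j * v l)) * F i m j (st k) n l)
    (j i p m x s : S) :
    F j i p m x (st s) * F j (st s) x s (st j) z0 =
      v p / (v i * v j) * F j p i (st m) (st s) x := by
  have hF : F j p i (st m) (st s) x * δ j (st s) x = F j p i (st m) (st s) x :=
    mul_natCast_eq_self (hδ01 _ _ _) fun h => hsupp _ _ _ _ _ _ (by rw [h]; simp)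
  have hn := hnorm j (st s) x
  rw [hst] at hn
  rw [htet3 j i p m x (st s), hn]
  calc _ = v p / (v i * v j) * (F j p i (st m) (st s) x * δ j (st s) x) := by
        have := hv x
        have := hv (st s)
        field_simp
    _ = _ := by rw [hF]

lemma sum_F_mul_F [Fintype S] [DecidableEq S] (hst : ∀ a, st (st a) = a) (hst0 : st z0 = z0)
    (hδ01 : ∀ i j k, δ i j k ≤ 1) (hδ0 : ∀ i j, δ i j z0 = if j = st i then 1 else 0)
    (hv : ∀ s, v s ≠ 0) (hv0 : v z0 = 1)
    (hsupp : ∀ i j m k l n,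
      δ i j m * δ k l (st m) * δ i l n * δ j k (st n) = 0 → F i j m k l n = 0)
    (hpent : ∀ m l q k p j i s r, ∑ x, F m l q k (st p) x * F j i p m x (st s) *
        F j (st s) x l k r = F j i p (st q) k (st r) * F r i (st q) m l (st s))
    (hnorm : ∀ i j k, F i j k (st j) (st i) z0 = (v k / (v i * v j)) * (δ i j k : ℂ))
    (htet2 : ∀ i j m k l n, F i j m k l n = F l k (st m) j i n)
    (htet3 : ∀ i j m k l n, F i j m k l n = (v m * v n / (v j * v l)) * F i m j (st k) n l)
    (m s q j p i : S) :
    ∑ x, F m s q (st j) (st p) x * F j p i (st m) (st s) x =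
      (if q = i then 1 else 0) * (v (st s) / v s) * δ j i p * δ s i m := by
  have hp := hpent m s q (st j) p j i s z0
  simp only [mul_assoc, F_mul_F_vacuum hst hδ01 hv hsupp hnorm htet3, hst0,
    F_vacuum_right hst hst0 hδ0 hsupp hnorm] at hp
  simp only [mul_left_comm _ (v p / (v i * v j)), ← mul_sum] at hp
  split_ifs at hp ⊢ with hqi
  · subst hqi
    apply mul_left_cancel₀ (div_ne_zero (hv p) (mul_ne_zero (hv q) (hv j)))
    rw [hp, F_vacuum_left hst hv hv0 hnorm htet2 htet3]
    ring
  · simpa [hv] using hp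

lemma sum_conj_F_mul_F [Fintype S] [DecidableEq S] (hst : ∀ a, st (st a) = a)
    (hst0 : st z0 = z0) (hδ01 : ∀ i j k, δ i j k ≤ 1)
    (hδ0 : ∀ i j, δ i j z0 = if j = st i then 1 else 0)
    (hv : ∀ s, v s ≠ 0) (hv0 : v z0 = 1)
    (hsupp : ∀ i j m k l n,
      δ i j m * δ k l (st m) * δ i l n * δ j k (st n) = 0 → F i j m k l n = 0)
    (hpent : ∀ m l q k p j i s r, ∑ x, F m l q k (st p) x * F j i p m x (st s) *
        F j (st s) x l k r = F j i p (st q) k (st r) * F r i (st q) m l (st s))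
    (hnorm : ∀ i j k, F i j k (st j) (st i) z0 = (v k / (v i * v j)) * (δ i j k : ℂ))
    (htet1 : ∀ i j m k l n, F i j m k l n = F j i m l k (st n))
    (htet2 : ∀ i j m k l n, F i j m k l n = F l k (st m) j i n)
    (htet3 : ∀ i j m k l n, F i j m k l n = (v m * v n / (v j * v l)) * F i m j (st k) n l)
    (hconj : ∀ i j m k l n,
      F (st i) (st j) (st m) (st k) (st l) (st n) = (starRingEnd ℂ) (F i j m k l n))
    (i a g j b b' : S) :
    ∑ k, (starRingEnd ℂ) (F i (st a) b g j k) * F i (st a) b' g j k =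
      (if b = b' then 1 else 0) * (v (st a) / v a) * δ g (st b') j * δ a (st b') (st i) := by
  have hkey := sum_F_mul_F hst hst0 hδ01 hδ0 hv hv0 hsupp hpent hnorm htet2 htet3
    (st i) a (st b) g j (st b')
  simp only [hst, (Function.Involutive.injective hst).eq_iff] at hkey
  rw [← hkey]
  refine Fintype.sum_bijective st (Function.Involutive.bijective hst) _ _ fun k => ?_
  rw [← hconj, hst, htet1 i (st a) b' g j k, htet2 (st a) i b' j g (st k)]

lemma v_st [Fintype S] [DecidableEq S] (hst : ∀ a, st (st a) = a)
    (hst0 : st z0 = z0) (hδ01 : ∀ i j k, δ i j k ≤ 1)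
    (hδsym2 : ∀ i j k, δ i j k = δ i k j)
    (hδ0 : ∀ i j, δ i j z0 = if j = st i then 1 else 0)
    (hv : ∀ s, v s ≠ 0) (hv0 : v z0 = 1)
    (hsupp : ∀ i j m k l n,
      δ i j m * δ k l (st m) * δ i l n * δ j k (st n) = 0 → F i j m k l n = 0)
    (hpent : ∀ m l q k p j i s r, ∑ x, F m l q k (st p) x * F j i p m x (st s) *
        F j (st s) x l k r = F j i p (st q) k (st r) * F r i (st q) m l (st s))
    (hnorm : ∀ i j k, F i j k (st j) (st i) z0 = (v k / (v i * v j)) * (δ i j k : ℂ))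
    (htet1 : ∀ i j m k l n, F i j m k l n = F j i m l k (st n))
    (htet2 : ∀ i j m k l n, F i j m k l n = F l k (st m) j i n)
    (htet3 : ∀ i j m k l n, F i j m k l n = (v m * v n / (v j * v l)) * F i m j (st k) n l)
    (hconj : ∀ i j m k l n,
      F (st i) (st j) (st m) (st k) (st l) (st n) = (starRingEnd ℂ) (F i j m k l n))
    (a : S) : v (st a) = v a := by
  set r : ℝ := ∑ k, Complex.normSq (F a (st a) z0 z0 z0 k)
  have hr : (r : ℂ) = v (st a) / v a := by
    have hsum := sum_conj_F_mul_F hst hst0 hδ01 hδ0 hv hv0 hsupp hpent hnorm htet1 htet2 htet3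
      hconj a a z0 z0 z0 z0
    rw [hst0, hδ0, hδsym2, hδ0, hst0] at hsum
    simp only [Complex.ofReal_sum, Complex.normSq_eq_conj_mul_self, r, hsum]
    simp
  have hr_sq : r ^ 2 = 1 := by
    have hsq : (r : ℂ) ^ 2 = 1 := by
      rw [hr, div_pow, div_eq_one_iff_eq (pow_ne_zero 2 (hv a)), sq, sq]
      exact v_st_mul_self hst hst0 hδ0 hδsym2 hv hv0 hnorm htet2 a
    exact_mod_cast hsq
  have hr_one : r = 1 :=
    (pow_eq_one_iff_of_nonneg (sum_nonneg fun k _ => Complex.normSq_nonneg _) two_ne_zero).mp hr_sq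
  rw [hr_one, Complex.ofReal_one, eq_comm, div_eq_one_iff_eq (hv a)] at hr
  exact hr

end StringNet

/-- Unitarity of string-net F-symbols in the fusion-allowed subspace, derived from the
pentagon equation, normalization, tetrahedral symmetry and the conjugation property.
Here `F i j m k l n` denotes `F^{ijm}_{kln}`, `st` is the string-type involution `*`,
`z0` is the vacuum string `0`, `δ` the fusion constraints and `v` the square roots of
the quantum dimensions. -/
theorem F_unitary_in_subspace {S : Type} [Fintype S] [DecidableEq S]
    (z0 : S) (st : S → S) (hst : ∀ a, st (st a) = a) (hst0 : st z0 = z0)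
    (δ : S → S → S → ℕ) (hδ01 : ∀ i j k, δ i j k ≤ 1)
    (hδsym1 : ∀ i j k, δ i j k = δ j i k)
    (hδsym2 : ∀ i j k, δ i j k = δ i k j)
    (hδst : ∀ i j k, δ (st i) (st j) (st k) = δ i j k)
    (hδ0 : ∀ i j, δ i j z0 = if j = st i then 1 else 0)
    (v : S → ℂ) (hv : ∀ s, v s ≠ 0) (hv0 : v z0 = 1)
    (F : S → S → S → S → S → S → ℂ)
    -- F-symbols vanish outside the fusion-allowed subspace
    (hsupp : ∀ i j m k l n,
      δ i j m * δ k l (st m) * δ i l n * δ j k (st n) = 0 → F i j m k l n = 0)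
    -- pentagon equation
    (hpent : ∀ m l q k p j i s r, ∑ x, F m l q k (st p) x * F j i p m x (st s) *
        F j (st s) x l k r = F j i p (st q) k (st r) * F r i (st q) m l (st s))
    -- normalization
    (hnorm : ∀ i j k, F i j k (st j) (st i) z0 = (v k / (v i * v j)) * (δ i j k : ℂ))
    -- tetrahedral symmetry
    (htet1 : ∀ i j m k l n, F i j m k l n = F j i m l k (st n))
    (htet2 : ∀ i j m k l n, F i j m k l n = F l k (st m) j i n)
    (htet3 : ∀ i j m k l n,
      F i j m k l n = (v m * v n / (v j * v l)) * F i m j (st k) n l)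
    -- conjugation property
    (hconj : ∀ i j m k l n,
      F (st i) (st j) (st m) (st k) (st l) (st n) = (starRingEnd ℂ) (F i j m k l n)) :
    ∀ i α γ j β β',
      ∑ k, (starRingEnd ℂ) (F i (st α) β γ j k) * F i (st α) β' γ j k =
        (if β = β' then 1 else 0) * (δ i (st α) β : ℂ) * (δ j (st β) γ : ℂ) := by
  intro i α γ j β β'
  rw [StringNet.sum_conj_F_mul_F hst hst0 hδ01 hδ0 hv hv0 hsupp hpent hnorm htet1 htet2 htet3
      hconj,
    StringNet.v_st hst hst0 hδ01 hδsym2 hδ0 hv hv0 hsupp hpent hnorm htet1 htet2 htet3 hconj,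
    div_self (hv α), mul_one]
  split_ifs with hββ'
  · subst hββ'
    have hδα : δ α (st β) (st i) = δ i (st α) β := by
      rw [← hδst, hst, hst, hδsym2, hδsym1]
    have hδγ : δ γ (st β) j = δ j (st β) γ := by
      rw [hδsym1, hδsym2, hδsym1]
    rw [hδα, hδγ]
    ring
  · simp
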